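/- Flipping (duality) of derivations: if there is a derivation from P to Q in SKS, then there is a derivation from ¬Q to ¬P. Each rule of SKS has a dual rule in SKS (ai↓ ↔ ai↑, c↓ ↔ c↑, w↓ ↔ w↑, and switch is self-dual), obtained by negating premise and conclusion and exchanging them. -/

import Mathlib

/-- Structures of system SKS. -/
inductive Str : Type
  | f : Str
  | t : Str
  | atom (n : ℕ) : Str
  | or (A B : Str) : Str
  | and (A B : Str) : Str
  | neg (A : Str) : Str

/-- Positive contexts: a structure with one hole, not under a negation. -/
inductive Ctx : Type
  | hole : Ctx
  | orl (S : Ctx) (T : Str) : Ctx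
  | orr (T : Str) (S : Ctx) : Ctx
  | andl (S : Ctx) (T : Str) : Ctx
  | andr (T : Str) (S : Ctx) : Ctx

def Ctx.fill : Ctx → Str → Str
  | .hole, R => R
  | .orl S T, R => .or (S.fill R) T
  | .orr T S, R => .or T (S.fill R)
  | .andl S T, R => .and (S.fill R) T
  | .andr T S, R => .and T (S.fill R)

/-- Structural equivalence `=` of SKS. -/
inductive equiv : Str → Str → Prop
  | refl (R) : equiv R R
  | symm {A B} : equiv A B → equiv B A
  | trans {A B C} : equiv A B → equiv B C → equiv A C
  | or_congr {A B C D} : equiv A B → equiv C D → equiv (.or A C) (.or B D)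
  | and_congr {A B C D} : equiv A B → equiv C D → equiv (.and A C) (.and B D)
  | neg_congr {A B} : equiv A B → equiv (.neg A) (.neg B)
  | or_assoc (A B C) : equiv (.or (.or A B) C) (.or A (.or B C))
  | or_comm (A B) : equiv (.or A B) (.or B A)
  | and_assoc (A B C) : equiv (.and (.and A B) C) (.and A (.and B C))
  | and_comm (A B) : equiv (.and A B) (.and B A)
  | dm_or (A B) : equiv (.neg (.or A B)) (.and (.neg A) (.neg B))
  | dm_and (A B) : equiv (.neg (.and A B)) (.or (.neg A) (.neg B))
  | neg_neg (A) : equiv (.neg (.neg A)) A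
  | neg_f : equiv (.neg .f) .t
  | neg_t : equiv (.neg .t) .f
  | or_f (R) : equiv (.or .f R) R
  | and_t (R) : equiv (.and .t R) R
  | or_t_t : equiv (.or .t .t) .t
  | and_f_f : equiv (.and .f .f) .f

/-- One inference step of SKS, applied in an arbitrary positive context. -/
inductive step : Str → Str → Prop
  | ai_down (S : Ctx) (a : ℕ) :
      step (S.fill .t) (S.fill (.or (.atom a) (.neg (.atom a))))
  | ai_up (S : Ctx) (a : ℕ) :
      step (S.fill (.and (.atom a) (.neg (.atom a)))) (S.fill .f)
  | s (S : Ctx) (R U T : Str) :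
      step (S.fill (.and (.or R U) T)) (S.fill (.or (.and R T) U))
  | c_down (S : Ctx) (R : Str) : step (S.fill (.or R R)) (S.fill R)
  | c_up (S : Ctx) (R : Str) : step (S.fill R) (S.fill (.and R R))
  | w_down (S : Ctx) (R : Str) : step (S.fill .f) (S.fill R)
  | w_up (S : Ctx) (R : Str) : step (S.fill R) (S.fill .t)

/-- Derivations in SKS: chains of rule instances and equivalence steps. -/
inductive Deriv : Str → Str → Prop
  | refl (R) : Deriv R R
  | step {A B C} : step A B → Deriv B C → Deriv A C
  | eq {A B C} : equiv A B → Deriv B C → Deriv A C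

/-!
Negation distributes over a positive context `S` by De Morgan, turning it into the dual context
`S.dual` (`∨` and `∧` exchanged, side structures negated). Hence the negation of a rule instance
`S{A} → S{B}` is, up to structural equivalence, an instance `S.dual{¬B} → S.dual{¬A}` of the dual
rule, and a derivation is flipped step by step, in reverse order.
-/

def Ctx.dual : Ctx → Ctx
  | .hole => .hole
  | .orl S T => .andl S.dual (.neg T)
  | .orr T S => .andr (.neg T) S.dual
  | .andl S T => .orl S.dual (.neg T)
  | .andr T S => .orr (.neg T) S.dual

theorem Ctx.fill_congr (S : Ctx) {A B : Str} (h : equiv A B) :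
    equiv (S.fill A) (S.fill B) := by
  induction S with
  | hole => exact h
  | orl S T ih => exact ih.or_congr (.refl T)
  | orr T S ih => exact (equiv.refl T).or_congr ih
  | andl S T ih => exact ih.and_congr (.refl T)
  | andr T S ih => exact (equiv.refl T).and_congr ih

theorem Ctx.neg_fill (S : Ctx) (A : Str) : equiv (.neg (S.fill A)) (S.dual.fill (.neg A)) := by
  induction S with
  | hole => exact .refl _
  | orl S T ih => exact (equiv.dm_or _ _).trans (ih.and_congr (.refl _))
  | orr T S ih => exact (equiv.dm_or _ _).trans ((equiv.refl _).and_congr ih)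
  | andl S T ih => exact (equiv.dm_and _ _).trans (ih.or_congr (.refl _))
  | andr T S ih => exact (equiv.dm_and _ _).trans ((equiv.refl _).or_congr ih)

theorem Ctx.neg_fill_equiv (S : Ctx) {A A' : Str} (h : equiv (.neg A) A') :
    equiv (.neg (S.fill A)) (S.dual.fill A') :=
  (S.neg_fill A).trans (S.dual.fill_congr h)

theorem Deriv.trans {A B C : Str} (h₁ : Deriv A B) (h₂ : Deriv B C) : Deriv A C := by
  induction h₁ with
  | refl => exact h₂
  | step s _ ih => exact .step s (ih h₂)
  | eq e _ ih => exact .eq e (ih h₂)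

theorem Deriv.of_equiv {A B : Str} (e : equiv A B) : Deriv A B :=
  .eq e (.refl B)

theorem Deriv.neg_fill_of_dual_step (S : Ctx) {A B A' B' : Str}
    (h : _root_.step (S.dual.fill B') (S.dual.fill A'))
    (hB : equiv (.neg B) B') (hA : equiv (.neg A) A') :
    Deriv (.neg (S.fill B)) (.neg (S.fill A)) :=
  .eq (S.neg_fill_equiv hB) (.step h (.of_equiv (S.neg_fill_equiv hA).symm))

theorem step.flip {A B : Str} (h : step A B) : Deriv (.neg B) (.neg A) := by
  cases h with
  | ai_down S a =>
    exact .neg_fill_of_dual_step S (.ai_up S.dual a)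
      ((equiv.dm_or _ _).trans ((equiv.and_comm _ _).trans ((equiv.neg_neg _).and_congr (.refl _))))
      .neg_t
  | ai_up S a =>
    exact .neg_fill_of_dual_step S (.ai_down S.dual a) .neg_f
      ((equiv.dm_and _ _).trans ((equiv.or_comm _ _).trans ((equiv.neg_neg _).or_congr (.refl _))))
  | s S R U T =>
    exact .neg_fill_of_dual_step S (.s S.dual (.neg R) (.neg T) (.neg U))
      ((equiv.dm_or _ _).trans ((equiv.dm_and _ _).and_congr (.refl _)))
      ((equiv.dm_and _ _).trans ((equiv.dm_or _ _).or_congr (.refl _)))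
  | c_down S R => exact .neg_fill_of_dual_step S (.c_up S.dual (.neg R)) (.refl _) (.dm_or _ _)
  | c_up S R => exact .neg_fill_of_dual_step S (.c_down S.dual (.neg R)) (.dm_and _ _) (.refl _)
  | w_down S R => exact .neg_fill_of_dual_step S (.w_up S.dual (.neg R)) (.refl _) .neg_f
  | w_up S R => exact .neg_fill_of_dual_step S (.w_down S.dual (.neg R)) .neg_t (.refl _)

/-- flipping (duality) of derivations: from a derivation from `P`
to `Q` we get a derivation from `¬Q` to `¬P`. -/
theorem deriv_flip (P Q : Str) (h : Deriv P Q) : Deriv (.neg Q) (.neg P) := by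
  induction h with
  | refl R => exact .refl _
  | step s _ ih => exact ih.trans s.flip
  | eq e _ ih => exact ih.trans (.of_equiv e.symm.neg_congr)
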